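/- Acyclicity of list segments: if s,h ⊨ lseg(x,z) and s(x) ≠ s(z), then s(z) is not in the domain of h, and s(x) is in the domain of h. -/

import Mathlib

def Heap := ℤ → Option ℤ
def Stack := String → ℤ

def hemp : Heap := fun _ => none
def hsingle (a v : ℤ) : Heap := fun l => if l = a then some v else none
def hdisj (h₁ h₂ : Heap) : Prop := ∀ l, h₁ l = none ∨ h₂ l = none
def hunion (h₁ h₂ : Heap) : Heap := fun l =>
  match h₁ l with
  | some v => some v
  | none => h₂ l
def hdom (h : Heap) : Set ℤ := {l | h l ≠ none}

/-- Acyclic list segment: `Lseg a b h` means `h` is a list segment from `a` to `b`. -/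
inductive Lseg : ℤ → ℤ → Heap → Prop
  | nil (a : ℤ) : Lseg a a hemp
  | cons {a b c : ℤ} {h : Heap} (hne : a ≠ b) (hfresh : h a = none)
      (ht : Lseg c b h) : Lseg a b (hunion (hsingle a c) h)

/-- Spatial predicates. -/
inductive SP where
  | emp : SP
  | next (x y : String) : SP
  | lseg (x y : String) : SP

/-- Satisfaction of a single spatial predicate. -/
def sat (s : Stack) (h : Heap) : SP → Prop
  | .emp => h = hemp
  | .next x y => h = hsingle (s x) (s y)
  | .lseg x y => Lseg (s x) (s y) h

/-- Satisfaction of a spatial conjunction (list of predicates). -/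
def satList (s : Stack) (h : Heap) : List SP → Prop
  | [] => h = hemp
  | S :: Sg => ∃ h₁ h₂, hdisj h₁ h₂ ∧ h = hunion h₁ h₂ ∧ sat s h₁ S ∧ satList s h₂ Sg

/-- Emptiness condition of a spatial predicate. -/
def emptyCond (s : Stack) : SP → Prop
  | .emp => True
  | .next _ _ => False
  | .lseg x y => s x = s y

/-- Address of a spatial predicate (dummy value 0 for `emp`, which is always empty). -/
def addrVal (s : Stack) : SP → ℤ
  | .emp => 0
  | .next x _ => s x
  | .lseg x _ => s x

def collide (s : Stack) (S S' : SP) : Prop :=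
  ¬ emptyCond s S ∧ ¬ emptyCond s S' ∧ addrVal s S = addrVal s S'

def wellFormed (s : Stack) (Sg : List SP) : Prop :=
  List.Pairwise (fun S S' => ¬ collide s S S') Sg

namespace Lseg

theorem apply_end_eq_none {a b : ℤ} {h : Heap} (hl : Lseg a b h) : h b = none := by
  induction hl with
  | nil => rfl
  | cons hne _ _ ih =>
    simpa only [hunion, hsingle, if_neg (Ne.symm hne)] using ih

theorem apply_start_ne_none {a b : ℤ} {h : Heap} (hl : Lseg a b h) (hne : a ≠ b) :
    h a ≠ none := by
  cases hl with
  | nil => exact absurd rfl hne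
  | cons => simp [hunion, hsingle]

end Lseg

theorem stmt9 (s : Stack) (h : Heap) (x z : String)
    (hl : sat s h (.lseg x z)) (hne : s x ≠ s z) :
    s z ∉ hdom h ∧ s x ∈ hdom h :=
  ⟨fun hz => hz hl.apply_end_eq_none, hl.apply_start_ne_none hne⟩
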